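/- arXiv:2503.02317 — 2 statements merged into one kernel-verified Lean document; each statement's English description precedes it below -/
import Mathlib

section
/- For every positive integer n, one has √n < c_n < √(n+1), where c_n = lim_{i→∞} s_i(n)^{2^{-i}}. -/
open Filter Topology Finset

/-- `sylv n i` is the generalized Sylvester sequence term `s_{i+1}(n)`:
`s_1(n) = n + 1` and `s_{i+1}(n) = s_i(n)^2 - s_i(n) + 1`. -/
def sylv (n : ℕ) : ℕ → ℕ
  | 0 => n + 1
  | i + 1 => sylv n i ^ 2 - sylv n i + 1

lemma sylv_two_le (n : ℕ) (hn : 0 < n) : ∀ i, 2 ≤ sylv n i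
  | 0 => by simp [sylv]; omega
  | i + 1 => by
      have h := sylv_two_le n hn i
      have h2 : sylv n i ≤ sylv n i ^ 2 := Nat.le_self_pow two_ne_zero _
      simp only [sylv]
      zify [h2]
      nlinarith

lemma sylv_real_succ (n : ℕ) (i : ℕ) :
    (sylv n (i + 1) : ℝ) = (sylv n i : ℝ) ^ 2 - sylv n i + 1 := by
  have h2 : sylv n i ≤ sylv n i ^ 2 := Nat.le_self_pow two_ne_zero _
  have h : sylv n (i + 1) + sylv n i = sylv n i ^ 2 + 1 := by
    simp only [sylv]; omega
  have := congrArg (fun k : ℕ => (k : ℝ)) h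
  push_cast at this
  linarith

/-- For every positive integer `n`, one has `√n < c_n < √(n+1)`, where
`c_n = lim_{i → ∞} s_i(n) ^ (2⁻¹ ^ i)` (here `sylv n i = s_{i+1}(n)`). -/
theorem sqrt_lt_c_lt_sqrt (n : ℕ) (hn : 0 < n) (c : ℝ)
    (hc : Tendsto (fun i : ℕ => (sylv n i : ℝ) ^ ((2⁻¹ : ℝ) ^ (i + 1))) atTop (𝓝 c)) :
    Real.sqrt n < c ∧ c < Real.sqrt (n + 1) := by
  set A : ℕ → ℝ := fun i => (sylv n i : ℝ) with hA
  have hA2 : ∀ i, (2 : ℝ) ≤ A i := fun i => by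
    simp only [hA]; exact_mod_cast sylv_two_le n hn i
  have hApos : ∀ i, 0 < A i := fun i => lt_of_lt_of_le two_pos (hA2 i)
  set e : ℕ → ℝ := fun k => (2⁻¹ : ℝ) ^ k with he
  have hepos : ∀ k, 0 < e k := fun k => pow_pos (by norm_num) k
  have hemul : ∀ k, 2 * e (k + 1) = e k := fun k => by
    simp only [he, pow_succ]; ring
  set f : ℕ → ℝ := fun i => A i ^ e (i + 1) with hf
  set g : ℕ → ℝ := fun i => (A i - 1) ^ e (i + 1) with hg
  -- square collapsing identity
  have hsq : ∀ (x : ℝ), 0 ≤ x → ∀ k, (x ^ 2) ^ e (k + 1) = x ^ e k := by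
    intro x hx k
    rw [← Real.rpow_natCast x 2, ← Real.rpow_mul hx]
    norm_num [hemul k]
  -- f strictly decreasing
  have hfstep : ∀ i, f (i + 1) < f i := by
    intro i
    have h1 : A (i + 1) < A i ^ 2 := by
      have := sylv_real_succ n i
      have h2 := hA2 i
      simp only [hA] at *
      nlinarith
    calc f (i + 1) = A (i + 1) ^ e (i + 2) := rfl
      _ < (A i ^ 2) ^ e (i + 2) :=
          Real.rpow_lt_rpow (le_of_lt (hApos _)) h1 (hepos _)
      _ = A i ^ e (i + 1) := hsq _ (le_of_lt (hApos i)) _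
  have hfanti : Antitone f := antitone_nat_of_succ_le fun i => (hfstep i).le
  -- g strictly increasing
  have hB1 : ∀ i, (1 : ℝ) ≤ A i - 1 := fun i => by linarith [hA2 i]
  have hgstep : ∀ i, g i < g (i + 1) := by
    intro i
    have h1 : (A i - 1) ^ 2 < A (i + 1) - 1 := by
      have := sylv_real_succ n i
      have h2 := hA2 i
      simp only [hA] at *
      nlinarith
    calc g i = (A i - 1) ^ e (i + 1) := rfl
      _ = ((A i - 1) ^ 2) ^ e (i + 2) := (hsq _ (by linarith [hB1 i]) _).symm
      _ < (A (i + 1) - 1) ^ e (i + 2) :=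
          Real.rpow_lt_rpow (by positivity) h1 (hepos _)
      _ = g (i + 1) := rfl
  have hgmono : Monotone g := monotone_nat_of_le_succ fun i => (hgstep i).le
  have hgf : ∀ i, g i < f i := fun i =>
    Real.rpow_lt_rpow (by linarith [hB1 i]) (by linarith [hB1 i]) (hepos _)
  -- c ≤ f 1
  have hcle : c ≤ f 1 := by
    refine le_of_tendsto hc (eventually_atTop.2 ⟨1, fun i hi => hfanti hi⟩)
  -- g 1 ≤ c
  have hgle : g 1 ≤ c := by
    refine ge_of_tendsto hc (eventually_atTop.2 ⟨1, fun i hi => ?_⟩)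
    exact le_of_lt (lt_of_le_of_lt (hgmono hi) (hgf i))
  -- compute sylv n 1 value
  have hs1 : A 1 = (n : ℝ) ^ 2 + n + 1 := by
    have := sylv_real_succ n 0
    simp only [hA, sylv] at *
    push_cast at this ⊢
    rw [this]; ring
  have hnR : (1 : ℝ) ≤ (n : ℝ) := by exact_mod_cast hn
  constructor
  · -- √n < g 1 ≤ c
    refine lt_of_lt_of_le ?_ hgle
    have key : Real.sqrt n = ((n : ℝ) ^ 2) ^ e (1 + 1) := by
      rw [hsq _ (by positivity) 1, he]
      rw [Real.sqrt_eq_rpow]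
      norm_num
    rw [key]
    simp only [hg, hs1]
    have h4 : ((n : ℝ) ^ 2 + n + 1 - 1 : ℝ) = (n : ℝ) ^ 2 + n := by ring
    rw [h4]
    exact Real.rpow_lt_rpow (by positivity) (by nlinarith) (hepos _)
  · -- c ≤ f 1 < √(n+1)
    refine lt_of_le_of_lt hcle ?_
    have key : Real.sqrt (n + 1) = (((n : ℝ) + 1) ^ 2) ^ e (1 + 1) := by
      rw [hsq _ (by positivity) 1, he]
      rw [Real.sqrt_eq_rpow]
      norm_num
    rw [key]
    simp only [hf, hs1]
    exact Real.rpow_lt_rpow (by positivity) (by nlinarith) (hepos _)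
end

section
/- If n and l are positive integers with n < l, then c_n < c_l, where c_m = lim_{i→∞} s_i(m)^{2^{-i}}. -/
open Filter Topology Finset

lemma sylv_one_le (m i : ℕ) : 1 ≤ sylv m i := by
  cases i <;> simp [sylv]

lemma sylv_cast (m i : ℕ) :
    (sylv m (i+1) : ℝ) = (sylv m i : ℝ)^2 - (sylv m i : ℝ) + 1 := by
  have h : sylv m i ≤ sylv m i ^ 2 := Nat.le_self_pow two_ne_zero _
  simp only [sylv]
  push_cast [h]
  ring

lemma exp_split (i : ℕ) : (2⁻¹ : ℝ) ^ (i + 1) = 2 * (2⁻¹ : ℝ) ^ (i + 2) := by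
  ring

lemma rpow_double (x : ℝ) (hx : 0 ≤ x) (e : ℝ) :
    x ^ (2 * e) = (x ^ 2) ^ e := by
  rw [Real.rpow_mul hx, Real.rpow_two]

lemma a_antitone (m : ℕ) :
    Antitone (fun i : ℕ => (sylv m i : ℝ) ^ ((2⁻¹ : ℝ) ^ (i + 1))) := by
  apply antitone_nat_of_succ_le
  intro i
  have hs1 : (1 : ℝ) ≤ (sylv m i : ℝ) := by exact_mod_cast sylv_one_le m i
  have hs0 : (0 : ℝ) ≤ (sylv m i : ℝ) := by linarith
  have he : (0 : ℝ) < (2⁻¹ : ℝ) ^ (i + 2) := by positivity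
  have hle : (sylv m (i+1) : ℝ) ≤ (sylv m i : ℝ) ^ 2 := by
    rw [sylv_cast]; nlinarith
  calc (sylv m (i+1) : ℝ) ^ ((2⁻¹ : ℝ) ^ (i + 1 + 1))
      ≤ ((sylv m i : ℝ) ^ 2) ^ ((2⁻¹ : ℝ) ^ (i + 2)) := by
        exact Real.rpow_le_rpow (by positivity) hle he.le
    _ = (sylv m i : ℝ) ^ ((2⁻¹ : ℝ) ^ (i + 1)) := by
        rw [exp_split i, rpow_double _ hs0]

lemma b_le (m i : ℕ) :
    ((m : ℝ) + 2⁻¹) ^ ((2⁻¹ : ℝ) ^ 1) ≤ ((sylv m i : ℝ) - 2⁻¹) ^ ((2⁻¹ : ℝ) ^ (i + 1)) := by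
  induction i with
  | zero =>
    have h : ((sylv m 0 : ℝ) - 2⁻¹) = (m : ℝ) + 2⁻¹ := by simp [sylv]; ring
    rw [h]
  | succ i ih =>
    refine ih.trans ?_
    have hs1 : (1 : ℝ) ≤ (sylv m i : ℝ) := by exact_mod_cast sylv_one_le m i
    have hb0 : (0 : ℝ) ≤ (sylv m i : ℝ) - 2⁻¹ := by linarith
    have he : (0 : ℝ) < (2⁻¹ : ℝ) ^ (i + 2) := by positivity
    have hle : ((sylv m i : ℝ) - 2⁻¹) ^ 2 ≤ (sylv m (i+1) : ℝ) - 2⁻¹ := by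
      rw [sylv_cast]; nlinarith
    calc ((sylv m i : ℝ) - 2⁻¹) ^ ((2⁻¹ : ℝ) ^ (i + 1))
        = (((sylv m i : ℝ) - 2⁻¹) ^ 2) ^ ((2⁻¹ : ℝ) ^ (i + 2)) := by
          rw [exp_split i, rpow_double _ hb0]
      _ ≤ ((sylv m (i+1) : ℝ) - 2⁻¹) ^ ((2⁻¹ : ℝ) ^ (i + 1 + 1)) := by
          exact Real.rpow_le_rpow (by positivity) hle he.le

lemma b_le_a (m i : ℕ) :
    ((sylv m i : ℝ) - 2⁻¹) ^ ((2⁻¹ : ℝ) ^ (i + 1)) ≤ (sylv m i : ℝ) ^ ((2⁻¹ : ℝ) ^ (i + 1)) := by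
  have hs1 : (1 : ℝ) ≤ (sylv m i : ℝ) := by exact_mod_cast sylv_one_le m i
  exact Real.rpow_le_rpow (by linarith) (by linarith) (by positivity)

/-- If `n < l` are positive integers, then `c_n < c_l`, where
`c_m = lim_{i → ∞} s_i(m) ^ (2⁻¹ ^ i)` (here `sylv m i = s_{i+1}(m)`). -/
theorem c_strictMono (n l : ℕ) (hn : 0 < n) (hl : 0 < l) (hnl : n < l) (cn cl : ℝ)
    (hcn : Tendsto (fun i : ℕ => (sylv n i : ℝ) ^ ((2⁻¹ : ℝ) ^ (i + 1))) atTop (𝓝 cn))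
    (hcl : Tendsto (fun i : ℕ => (sylv l i : ℝ) ^ ((2⁻¹ : ℝ) ^ (i + 1))) atTop (𝓝 cl)) :
    cn < cl := by
  -- cn ≤ a n 1
  have h1 : cn ≤ (sylv n 1 : ℝ) ^ ((2⁻¹ : ℝ) ^ 2) := by
    refine le_of_tendsto hcn (eventually_atTop.2 ⟨1, fun j hj => ?_⟩)
    exact a_antitone n hj
  -- (l + 1/2)^(1/2) ≤ cl
  have h2 : ((l : ℝ) + 2⁻¹) ^ ((2⁻¹ : ℝ) ^ 1) ≤ cl := by
    refine ge_of_tendsto hcl (Eventually.of_forall fun i => ?_)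
    exact (b_le l i).trans (b_le_a l i)
  refine lt_of_le_of_lt h1 (lt_of_lt_of_le ?_ h2)
  -- (sylv n 1)^(1/4) < (l + 1/2)^(1/2)
  have hln : (n : ℝ) + 1 ≤ (l : ℝ) := by exact_mod_cast hnl
  have hbase : (sylv n 1 : ℝ) < ((l : ℝ) + 2⁻¹) ^ 2 := by
    rw [sylv_cast]
    simp only [sylv]
    push_cast
    nlinarith
  calc (sylv n 1 : ℝ) ^ ((2⁻¹ : ℝ) ^ 2)
      < (((l : ℝ) + 2⁻¹) ^ 2) ^ ((2⁻¹ : ℝ) ^ 2) := by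
        refine Real.rpow_lt_rpow (by positivity) hbase (by positivity)
    _ = ((l : ℝ) + 2⁻¹) ^ ((2⁻¹ : ℝ) ^ 1) := by
        rw [show ((2⁻¹:ℝ)^1) = 2 * (2⁻¹:ℝ)^2 by ring, rpow_double _ (by positivity)]
end
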